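/- arXiv:2105.04465 — 7 statements merged into one kernel-verified Lean document; each statement's English description precedes it below -/
import Mathlib

section
/- Fix integers 1 ≤ k ≤ n−1 and let S be a family of k-element subsets of the ground set Fin n. Then S is the collection of circuit-hyperplanes of a sparse paving matroid of rank k on Fin n if and only if any two distinct members of S intersect in at most k−2 elements (i.e. S is a stable set of the Johnson graph J(n,k); equivalently, the 0/1-indicator vectors of the members of S form a binary code of length n, constant weight k and minimum Hamming distance at least 4). -/
open Set Polynomial Pointwise

namespace EhrhartMatroid

variable {α : Type*}

/-- A circuit: a dependent set all of whose proper subsets are independent. -/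
def IsCircuit (M : Matroid α) (C : Set α) : Prop :=
  M.Dep C ∧ ∀ D, D ⊂ C → M.Indep D

/-- A hyperplane: a maximal proper flat. -/
def IsHyperplane (M : Matroid α) (H : Set α) : Prop :=
  M.IsFlat H ∧ H ≠ M.E ∧ ∀ F, M.IsFlat F → H ⊆ F → F = H ∨ F = M.E

/-- A circuit-hyperplane: simultaneously a circuit and a hyperplane. -/
def IsCircuitHyperplane (M : Matroid α) (H : Set α) : Prop :=
  IsCircuit M H ∧ IsHyperplane M H

/-- The rank of a matroid: the (common) cardinality of its bases. -/
noncomputable def rank (M : Matroid α) : ℕ :=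
  sSup {n | ∃ B, M.IsBase B ∧ B.ncard = n}

/-- A paving matroid: every circuit has cardinality at least the rank. -/
def IsPaving (M : Matroid α) : Prop :=
  ∀ C, IsCircuit M C → rank M ≤ C.ncard

/-- A sparse paving matroid: both the matroid and its dual are paving. -/
def IsSparsePaving (M : Matroid α) : Prop :=
  IsPaving M ∧ IsPaving M✶

/-- A matroid is connected if any two elements of the ground set either
coincide or lie in a common circuit. -/
def Connected (M : Matroid α) : Prop :=
  M.E.Nonempty ∧ ∀ e ∈ M.E, ∀ f ∈ M.E,
    e = f ∨ ∃ C, IsCircuit M C ∧ e ∈ C ∧ f ∈ C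

/-- The basis polytope of a matroid on `Fin n`: the convex hull of the
indicator vectors of the bases. -/
noncomputable def basisPolytope {n : ℕ} (M : Matroid (Fin n)) : Set (Fin n → ℝ) :=
  convexHull ℝ {x | ∃ B, M.IsBase B ∧ x = Set.indicator B 1}

/-- The hypersimplex `Δ_{k,n}`: the convex hull of all 0/1-vectors with exactly
`k` coordinates equal to `1`. It is the basis polytope of `U_{k,n}`. -/
noncomputable def hypersimplex (k n : ℕ) : Set (Fin n → ℝ) :=
  convexHull ℝ {x | ∃ B : Set (Fin n), B.ncard = k ∧ x = Set.indicator B 1}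

/-- The number of lattice points in the `t`-th dilate of `P ⊆ ℝ^n`. -/
noncomputable def latticeCount {n : ℕ} (P : Set (Fin n → ℝ)) (t : ℕ) : ℕ :=
  {z : Fin n → ℤ | (fun i => (z i : ℝ)) ∈ (t : ℝ) • P}.ncard

/-- A matroid on `Fin n` is Ehrhart positive if the polynomial counting the lattice
points of the dilates of its basis polytope has positive coefficients in all degrees
`0, …, natDegree`. -/
def EhrhartPositive {n : ℕ} (M : Matroid (Fin n)) : Prop :=
  ∀ p : Polynomial ℚ,
    (∀ t : ℕ, p.eval (t : ℚ) = latticeCount (basisPolytope M) t) →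
    ∀ m ≤ p.natDegree, 0 < p.coeff m

/-- The polynomial `binom(t+j, j) = (t+1)(t+2)⋯(t+j)/j!` in `ℚ[t]`. -/
noncomputable def binomPoly (j : ℕ) : Polynomial ℚ :=
  Polynomial.C (1 / (j.factorial : ℚ)) *
    ∏ i ∈ Finset.range j, (Polynomial.X + Polynomial.C ((i : ℚ) + 1))

/-- The Ehrhart polynomial `F_{k,n}` of the minimal matroid `T_{k,n}`. -/
noncomputable def F (k n : ℕ) : Polynomial ℚ :=
  Polynomial.C (1 / (((n - 1).choose (k - 1) : ℕ) : ℚ)) * binomPoly (n - k) *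
    ∑ j ∈ Finset.range k, Polynomial.C (((n - k - 1 + j).choose j : ℕ) : ℚ) * binomPoly j

/-- The shifted polynomial `F_{k,n}(t-1)`. -/
noncomputable def Fshift (k n : ℕ) : Polynomial ℚ :=
  (F k n).comp (Polynomial.X - 1)

/-!
Two distinct circuit-hyperplanes `A`, `B` cannot differ by a single exchange: if `B \ A = {e}`,
then `e ∈ cl (B \ {e}) ⊆ cl A = A`. Conversely, if no `(k-1)`-set lies in two members of `S`,
the `k`-sets outside `S` satisfy basis exchange, since an exchange can only fail by producing
two members of `S` through a common `(k-1)`-set. In the resulting matroid every set of size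
`< k` is independent, so it is paving, and replacing a single element of some `A ∈ S` by one
outside `A` always gives a basis, which makes each `A ∈ S` a circuit-hyperplane. Its dual
arises in the same way from the complements of the members of `S`, which are again pairwise
far apart, so it is paving too.
-/

def IsJohnsonStable (k : ℕ) (S : Set (Set α)) : Prop :=
  ∀ A ∈ S, ∀ B ∈ S, A ≠ B → (A ∩ B).ncard + 2 ≤ k

section Stable

variable [Finite α] {k : ℕ} {S : Set (Set α)}

theorem IsJohnsonStable.eq_of_subset_of_subset (hS : IsJohnsonStable k S) {A B J : Set α}
    (hA : A ∈ S) (hB : B ∈ S) (hJA : J ⊆ A) (hJB : J ⊆ B) (hJ : k ≤ J.ncard + 1) :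
    A = B := by
  by_contra hne
  have := ncard_le_ncard (subset_inter hJA hJB)
  have := hS A hA B hB hne
  omega

theorem IsJohnsonStable.insert_notMem_or_insert_notMem (hS : IsJohnsonStable k S) {J : Set α}
    {x y : α} (hJ : k ≤ J.ncard + 1) (hx : x ∉ J) (hxy : x ≠ y) :
    insert x J ∉ S ∨ insert y J ∉ S := by
  by_contra! h
  have hxyJ := hS.eq_of_subset_of_subset h.1 h.2 (subset_insert x J) (subset_insert y J) hJ
  exact (hxyJ ▸ mem_insert x J : x ∈ insert y J).elim hxy hx

theorem IsJohnsonStable.exists_superset_ncard_eq_notMem (hS : IsJohnsonStable k S)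
    (hk : k < Nat.card α) {I : Set α} (hI : I.ncard < k) :
    ∃ B, I ⊆ B ∧ B.ncard = k ∧ B ∉ S := by
  obtain ⟨J, hIJ, -, hJ⟩ := exists_subsuperset_card_eq (subset_univ I)
    (show I.ncard ≤ k - 1 by omega) (by rw [ncard_univ]; omega)
  obtain ⟨x, y, hx, hy, hxy⟩ := (one_lt_ncard_iff (toFinite Jᶜ)).1 <| by
    have := ncard_add_ncard_compl J
    omega
  have hcard : ∀ z ∉ J, (insert z J).ncard = k := fun z hz => by
    rw [ncard_insert_of_notMem hz]
    omega
  rcases hS.insert_notMem_or_insert_notMem (by omega) hx hxy with h | h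
  · exact ⟨_, hIJ.trans (subset_insert x J), hcard x hx, h⟩
  · exact ⟨_, hIJ.trans (subset_insert y J), hcard y hy, h⟩

theorem IsJohnsonStable.exchangeProperty (hS : IsJohnsonStable k S) :
    Matroid.ExchangeProperty (fun B : Set α => B.ncard = k ∧ B ∉ S) := by
  rintro X Y ⟨hX, -⟩ ⟨hY, hYS⟩ a ⟨haX, haY⟩
  have hJ : (X \ {a}).ncard + 1 = k := by rw [ncard_sdiff_singleton_add_one haX, hX]
  have hcard : ∀ z ∉ X, (insert z (X \ {a})).ncard = k := fun z hz => by
    rw [ncard_insert_of_notMem fun h => hz h.1]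
    omega
  obtain ⟨b, hbY, hbX⟩ : (Y \ X).Nonempty := sdiff_nonempty.2 fun hYX =>
    haY (eq_of_subset_of_ncard_le hYX (by rw [hX, hY]) ▸ haX)
  by_cases hbS : insert b (X \ {a}) ∈ S
  · -- `Y` is not this member of `S`, so it has a second element `c` outside `X`.
    obtain ⟨c, hcY, hcZ⟩ : (Y \ insert b (X \ {a})).Nonempty := sdiff_nonempty.2 fun hYZ =>
      hYS (eq_of_subset_of_ncard_le hYZ (by rw [hcard b hbX, hY]) ▸ hbS)
    have hcX : c ∉ X := fun hcX =>
      hcZ (mem_insert_of_mem b ⟨hcX, fun hca => haY (eq_of_mem_singleton hca ▸ hcY)⟩)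
    have hbc : b ≠ c := fun hbc => hcZ (hbc ▸ mem_insert b _)
    refine ⟨c, ⟨hcY, hcX⟩, hcard c hcX, ?_⟩
    exact (hS.insert_notMem_or_insert_notMem hJ.ge (fun h => hbX h.1) hbc).resolve_left
      (not_not.2 hbS)
  · exact ⟨b, ⟨hbY, hbX⟩, hcard b hbX, hbS⟩

theorem IsJohnsonStable.image_compl (hS : IsJohnsonStable k S)
    (hcard : ∀ A ∈ S, A.ncard = k) : IsJohnsonStable (Nat.card α - k) (compl '' S) := by
  rintro _ ⟨A, hA, rfl⟩ _ ⟨B, hB, rfl⟩ hne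
  rw [← compl_union]
  have := hS A hA B hB fun h => hne (h ▸ rfl)
  have := ncard_inter_add_ncard_union A B
  have := ncard_add_ncard_compl (A ∪ B)
  have := hcard A hA
  have := hcard B hB
  omega

end Stable

theorem isCircuit_iff_matroid_isCircuit {M : Matroid α} {C : Set α} :
    IsCircuit M C ↔ M.IsCircuit C :=
  Matroid.isCircuit_iff_forall_ssubset.symm

theorem _root_.Matroid.IsFlat.eq_ground_of_isBase_subset {M : Matroid α} {F B : Set α}
    (hF : M.IsFlat F) (hB : M.IsBase B) (hBF : B ⊆ F) : F = M.E := by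
  rw [← hF.closure, hB.spanning.closure_eq_of_superset hBF]

theorem IsCircuit.sdiff_ne_singleton_of_isFlat {M : Matroid α} {C F : Set α}
    (hC : IsCircuit M C) (hF : M.IsFlat F) (e : α) : C \ F ≠ {e} := by
  intro h
  have heCF : e ∈ C \ F := h ▸ mem_singleton e
  have hsub : C \ {e} ⊆ F := fun x ⟨hxC, hxe⟩ => by
    by_contra hxF
    have hxCF : x ∈ C \ F := ⟨hxC, hxF⟩
    exact hxe (h ▸ hxCF)
  have hecl := (isCircuit_iff_matroid_isCircuit.1 hC).mem_closure_sdiff_singleton_of_mem heCF.1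
  exact heCF.2 (hF.closure ▸ M.closure_subset_closure hsub hecl)

theorem IsCircuitHyperplane.ncard_inter_add_two_le [Finite α] {M : Matroid α} {A B : Set α}
    {k : ℕ} (hA : IsCircuitHyperplane M A) (hB : IsCircuitHyperplane M B) (hne : A ≠ B)
    (hAk : A.ncard = k) (hBk : B.ncard = k) : (A ∩ B).ncard + 2 ≤ k := by
  have hBA := ncard_inter_add_ncard_sdiff_eq_ncard B A
  have hBA₀ : (B \ A).ncard ≠ 0 := fun h0 => hne <| Eq.symm <|
    eq_of_subset_of_ncard_le (sdiff_eq_empty.1 ((ncard_eq_zero).1 h0)) (by rw [hAk, hBk])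
  have hBA₁ : (B \ A).ncard ≠ 1 := fun h1 =>
    let ⟨e, he⟩ := ncard_eq_one.1 h1
    hB.1.sdiff_ne_singleton_of_isFlat hA.2.1 e he
  rw [inter_comm]
  omega

theorem rank_eq_ncard_of_isBase {M : Matroid α} {B : Set α} (hB : M.IsBase B) :
    rank M = B.ncard := by
  have hcards : {m | ∃ B', M.IsBase B' ∧ B'.ncard = m} = {B.ncard} := by
    ext m
    constructor
    · rintro ⟨B', hB', rfl⟩
      exact hB'.ncard_eq_ncard_of_isBase hB
    · rintro rfl
      exact ⟨B, hB, rfl⟩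
  rw [rank, hcards, csSup_singleton]

section GivenBases

variable {M : Matroid α} {k : ℕ} {S : Set (Set α)}

theorem rank_eq_of_isBase_iff (hB : ∀ B, M.IsBase B ↔ B.ncard = k ∧ B ∉ S) :
    rank M = k :=
  let ⟨_, hB₀⟩ := M.exists_isBase
  (rank_eq_ncard_of_isBase hB₀).trans ((hB _).1 hB₀).1

variable [Finite α]

theorem isBase_of_indep_of_ncard_eq (hB : ∀ B, M.IsBase B ↔ B.ncard = k ∧ B ∉ S)
    {I : Set α} (hI : M.Indep I) (hIk : I.ncard = k) : M.IsBase I := by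
  obtain ⟨B, hBb, hIB⟩ := hI.exists_isBase_superset
  rwa [eq_of_subset_of_ncard_le hIB (by rw [((hB B).1 hBb).1, hIk])]

theorem indep_of_ncard_lt (hS : IsJohnsonStable k S) (hk : k < Nat.card α)
    (hB : ∀ B, M.IsBase B ↔ B.ncard = k ∧ B ∉ S) {I : Set α} (hI : I.ncard < k) :
    M.Indep I := by
  obtain ⟨B, hIB, hBk, hBS⟩ := hS.exists_superset_ncard_eq_notMem hk hI
  exact ((hB B).2 ⟨hBk, hBS⟩).indep.subset hIB

theorem isPaving_of_isBase_iff (hS : IsJohnsonStable k S) (hk : k < Nat.card α)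
    (hB : ∀ B, M.IsBase B ↔ B.ncard = k ∧ B ∉ S) : IsPaving M := fun C hC => by
  rw [rank_eq_of_isBase_iff hB]
  by_contra! hC_lt
  exact hC.1.not_indep (indep_of_ncard_lt hS hk hB hC_lt)

theorem dual_isBase_iff_of_isBase_iff (hk : k ≤ Nat.card α) (hE : M.E = univ)
    (hB : ∀ B, M.IsBase B ↔ B.ncard = k ∧ B ∉ S) {B : Set α} :
    M✶.IsBase B ↔ B.ncard = Nat.card α - k ∧ B ∉ compl '' S := by
  rw [Matroid.dual_isBase_iff (hE ▸ subset_univ B), hE, ← compl_eq_univ_sdiff, hB,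
    mem_compl_image]
  have := ncard_add_ncard_compl B
  exact and_congr_left fun _ => by omega

theorem isBase_insert_sdiff_singleton (hS : IsJohnsonStable k S)
    (hcard : ∀ A ∈ S, A.ncard = k) (hB : ∀ B, M.IsBase B ↔ B.ncard = k ∧ B ∉ S)
    {A : Set α} (hA : A ∈ S) {a e : α} (ha : a ∈ A) (he : e ∉ A) :
    M.IsBase (insert e (A \ {a})) := by
  have hJ : (A \ {a}).ncard + 1 = k := by rw [ncard_sdiff_singleton_add_one ha, hcard A hA]
  refine (hB _).2 ⟨?_, fun heS => he ?_⟩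
  · rw [ncard_insert_of_notMem fun h => he h.1, hJ]
  · exact hS.eq_of_subset_of_subset heS hA (subset_insert e _) sdiff_subset hJ.ge ▸
      mem_insert e _

theorem mem_of_isCircuitHyperplane (hS : IsJohnsonStable k S) (hk : k < Nat.card α)
    (hB : ∀ B, M.IsBase B ↔ B.ncard = k ∧ B ∉ S) {H : Set α}
    (hH : IsCircuitHyperplane M H) : H ∈ S := by
  obtain ⟨hC, hF, hHE, -⟩ := hH
  have hkH : k ≤ H.ncard := by
    by_contra! hlt
    exact hC.1.not_indep (indep_of_ncard_lt hS hk hB hlt)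
  obtain hkH | hkH := hkH.eq_or_lt
  · by_contra hHS
    exact hC.1.not_indep ((hB H).2 ⟨hkH.symm, hHS⟩).indep
  · obtain ⟨D, hDH, hDk⟩ := exists_subset_card_eq hkH.le
    have hD := hC.2 D (hDH.ssubset_of_ne (by rintro rfl; omega))
    exact absurd (hF.eq_ground_of_isBase_subset (isBase_of_indep_of_ncard_eq hB hD hDk) hDH) hHE

theorem isCircuitHyperplane_of_mem (hS : IsJohnsonStable k S) (hcard : ∀ A ∈ S, A.ncard = k)
    (hk : k < Nat.card α) (hE : M.E = univ) (hB : ∀ B, M.IsBase B ↔ B.ncard = k ∧ B ∉ S)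
    {A : Set α} (hA : A ∈ S) : IsCircuitHyperplane M A := by
  have hAE : A ⊆ M.E := hE ▸ subset_univ A
  have hdep : M.Dep A :=
    ⟨fun hi => ((hB A).1 (isBase_of_indep_of_ncard_eq hB hi (hcard A hA))).2 hA, hAE⟩
  obtain ⟨a, ha⟩ := hdep.nonempty
  have hC : IsCircuit M A :=
    ⟨hdep, fun D hD => indep_of_ncard_lt hS hk hB (hcard A hA ▸ ncard_lt_ncard hD)⟩
  have hcl : M.closure A ⊆ A := fun x hx => by
    by_contra hxA
    rw [← (isCircuit_iff_matroid_isCircuit.1 hC).closure_sdiff_singleton_eq a] at hx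
    have hJ := hC.2 _ (sdiff_singleton_ssubset.2 ha)
    exact ((hJ.mem_closure_iff_of_notMem fun h => hxA h.1).1 hx).not_indep
      (isBase_insert_sdiff_singleton hS hcard hB hA ha hxA).indep
  have hF : M.IsFlat A := Matroid.isFlat_iff_closure_eq.2 (hcl.antisymm (M.subset_closure A hAE))
  refine ⟨hC, hF, fun hAE' => ?_, fun F hF' hAF => ?_⟩
  · have := hcard A hA
    rw [hAE', hE, ncard_univ] at this
    omega
  · refine (eq_or_ne F A).imp_right fun hFA => ?_
    obtain ⟨f, hfF, hfA⟩ := exists_of_ssubset (hAF.ssubset_of_ne hFA.symm)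
    exact hF'.eq_ground_of_isBase_subset (isBase_insert_sdiff_singleton hS hcard hB hA ha hfA)
      (insert_subset hfF (sdiff_subset.trans hAF))

end GivenBases

theorem exists_isSparsePaving_setOf_isCircuitHyperplane_eq [Finite α] {k : ℕ}
    {S : Set (Set α)} (hS : IsJohnsonStable k S) (hcard : ∀ A ∈ S, A.ncard = k) (hk₀ : 0 < k)
    (hk : k < Nat.card α) :
    ∃ M : Matroid α, M.E = univ ∧ IsSparsePaving M ∧ rank M = k ∧
      {H | IsCircuitHyperplane M H} = S := by
  obtain ⟨B₀, -, hB₀⟩ := hS.exists_superset_ncard_eq_notMem hk (I := ∅) (by simpa)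
  let M := Matroid.ofIsBaseOfFinite (toFinite univ) (fun B => B.ncard = k ∧ B ∉ S)
    ⟨B₀, hB₀⟩ hS.exchangeProperty fun B _ => subset_univ B
  have hB : ∀ B, M.IsBase B ↔ B.ncard = k ∧ B ∉ S := fun _ => Iff.rfl
  have hE : M.E = univ := rfl
  have hB_dual := fun B => dual_isBase_iff_of_isBase_iff (B := B) hk.le hE hB
  refine ⟨M, hE, ⟨isPaving_of_isBase_iff hS hk hB, ?_⟩, rank_eq_of_isBase_iff hB, ?_⟩
  · exact isPaving_of_isBase_iff (hS.image_compl hcard) (by omega) hB_dual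
  · ext H
    exact ⟨mem_of_isCircuitHyperplane hS hk hB, isCircuitHyperplane_of_mem hS hcard hk hE hB⟩

theorem circuitHyperplanes_iff_stable (n k : ℕ) (hk : 1 ≤ k) (hkn : k ≤ n - 1)
    (S : Set (Set (Fin n))) (hS : ∀ A ∈ S, A.ncard = k) :
    (∃ M : Matroid (Fin n), M.E = Set.univ ∧ IsSparsePaving M ∧ rank M = k ∧
        {H | IsCircuitHyperplane M H} = S) ↔
      ∀ A ∈ S, ∀ B ∈ S, A ≠ B → ((A ∩ B).ncard : ℤ) ≤ (k : ℤ) - 2 := by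
  have hstable : IsJohnsonStable k S ↔
      ∀ A ∈ S, ∀ B ∈ S, A ≠ B → ((A ∩ B).ncard : ℤ) ≤ (k : ℤ) - 2 :=
    forall₂_congr fun _ _ => forall₂_congr fun _ _ => imp_congr_right fun _ => by omega
  rw [← hstable]
  constructor
  · rintro ⟨M, -, -, -, rfl⟩ A hA B hB hne
    exact IsCircuitHyperplane.ncard_inter_add_two_le hA hB hne (hS A hA) (hS B hB)
  · intro hstab
    exact exists_isSparsePaving_setOf_isCircuitHyperplane_eq hstab hS hk (by rw [Nat.card_fin]; omega)

end EhrhartMatroid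
end

section
/- For all integers n ≥ 1 and 0 ≤ k ≤ n there exists a family S of k-element subsets of Fin n such that any two distinct members of S intersect in at most k−2 elements (equivalently, the 0/1-indicator vectors of the members of S form a binary code of length n, constant weight k and minimum Hamming distance at least 4) and n·|S| ≥ binom(n,k). -/
open Set Polynomial Pointwise

namespace EhrhartMatroid

variable {α : Type*}

/-! Graham–Sloane: let `f : α → G` be an injection into a finite commutative monoid with
cancellation. Two distinct `k`-sets with the same sum `∑ x ∈ A, f x` cannot differ in a single
element, since exchanging `a` for `b` turns the sum `s + f a` into `s + f b`. Hence every fibre of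
`A ↦ ∑ x ∈ A, f x` on `k`-sets has minimum distance `4`, and the largest of the `|G|` fibres has at
least `binom(|α|, k) / |G|` members. For `α = Fin n` take `G = ZMod n`. -/

theorem card_inter_add_two_le_of_sum_eq {G : Type*} [AddCancelCommMonoid G] [DecidableEq α]
    {f : α → G} (hf : Function.Injective f) {A B : Finset α} (hAB : A ≠ B)
    (hcard : A.card = B.card) (hsum : ∑ x ∈ A, f x = ∑ x ∈ B, f x) :
    (A ∩ B).card + 2 ≤ A.card := by
  have hA := Finset.card_inter_add_card_sdiff A B
  have hB := Finset.card_inter_add_card_sdiff B A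
  rw [Finset.inter_comm] at hB
  have hsdiff_ne_zero : (A \ B).card ≠ 0 := fun h => hAB <| Finset.eq_of_subset_of_card_le
    (Finset.sdiff_eq_empty_iff_subset.mp (Finset.card_eq_zero.mp h)) hcard.ge
  have hsdiff_ne_one : (A \ B).card ≠ 1 := by
    intro h
    obtain ⟨a, ha⟩ := Finset.card_eq_one.mp h
    obtain ⟨b, hb⟩ := Finset.card_eq_one.mp (show (B \ A).card = 1 by omega)
    have hab : f a = f b := by
      have hsumA := Finset.sum_inter_add_sum_sdiff A B f
      have hsumB := Finset.sum_inter_add_sum_sdiff B A f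
      rw [ha, Finset.sum_singleton] at hsumA
      rw [hb, Finset.sum_singleton, Finset.inter_comm, ← hsum, ← hsumA] at hsumB
      exact (add_left_cancel hsumB).symm
    have haAB : a ∈ A \ B := by rw [ha]; exact Finset.mem_singleton_self a
    have hbBA : b ∈ B \ A := by rw [hb]; exact Finset.mem_singleton_self b
    exact (Finset.mem_sdiff.mp haAB).2 (hf hab ▸ (Finset.mem_sdiff.mp hbBA).1)
  omega

theorem exists_constant_weight_code_of_injective [Fintype α] [DecidableEq α] {G : Type*}
    [AddCancelCommMonoid G] [Fintype G] {f : α → G} (hf : Function.Injective f) (k : ℕ) :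
    ∃ S : Finset (Finset α), (∀ A ∈ S, A.card = k) ∧
      (∀ A ∈ S, ∀ B ∈ S, A ≠ B → (A ∩ B).card + 2 ≤ k) ∧
      (Fintype.card α).choose k ≤ Fintype.card G * S.card := by
  classical
  set T := Finset.powersetCard k (Finset.univ : Finset α)
  obtain ⟨c, -, hc⟩ := Finset.exists_max_image Finset.univ
    (fun c => (T.filter fun A => ∑ x ∈ A, f x = c).card) Finset.univ_nonempty
  refine ⟨T.filter fun A => ∑ x ∈ A, f x = c, fun A hA => ?_, fun A hA B hB hAB => ?_, ?_⟩
  · exact (Finset.mem_powersetCard.mp (Finset.mem_filter.mp hA).1).2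
  · obtain ⟨hAT, hAc⟩ := Finset.mem_filter.mp hA
    obtain ⟨hBT, hBc⟩ := Finset.mem_filter.mp hB
    have hAk := (Finset.mem_powersetCard.mp hAT).2
    have hBk := (Finset.mem_powersetCard.mp hBT).2
    exact hAk ▸ card_inter_add_two_le_of_sum_eq hf hAB (hAk.trans hBk.symm) (hAc.trans hBc.symm)
  · have hT : T.card ≤ _ * Finset.univ.card :=
      Finset.card_le_mul_card_image_of_maps_to (fun A _ => Finset.mem_univ (∑ x ∈ A, f x)) _
        (fun c' _ => hc c' (Finset.mem_univ c'))
    rw [Finset.card_powersetCard, Finset.card_univ] at hT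
    rwa [mul_comm] at hT

theorem exists_large_constant_weight_code_general (n k : ℕ) (hn : 1 ≤ n) :
    ∃ S : Finset (Finset (Fin n)),
      (∀ A ∈ S, A.card = k) ∧
      (∀ A ∈ S, ∀ B ∈ S, A ≠ B → ((A ∩ B).card : ℤ) ≤ (k : ℤ) - 2) ∧
      n.choose k ≤ n * S.card := by
  have : NeZero n := ⟨by omega⟩
  obtain ⟨S, hcard, hinter, hsize⟩ :=
    exists_constant_weight_code_of_injective (ZMod.finEquiv n).injective k
  rw [Fintype.card_fin, ZMod.card] at hsize
  refine ⟨S, hcard, fun A hA B hB hAB => ?_, hsize⟩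
  have := hinter A hA B hB hAB
  omega

theorem exists_large_constant_weight_code (n k : ℕ) (hn : 1 ≤ n) (hk : k ≤ n) :
    ∃ S : Finset (Finset (Fin n)),
      (∀ A ∈ S, A.card = k) ∧
      (∀ A ∈ S, ∀ B ∈ S, A ≠ B → ((A ∩ B).card : ℤ) ≤ (k : ℤ) - 2) ∧
      n.choose k ≤ n * S.card :=
  exists_large_constant_weight_code_general n k hn

end EhrhartMatroid
end

section
/- For integers 1 ≤ k < n, the coefficient of t² in the polynomial F_{k,n}(t−1) equals (1/binom(n−1,k−1)) · ( c(n−k,2)/(n−k)! + (1/(n−k)) · Σ_{j=1}^{k−1} (1/j)·binom(n−k−1+j, j) ). -/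
open Set Polynomial Pointwise

namespace EhrhartMatroid

variable {α : Type*}

/-! Substituting `t - 1` turns `binom(t+j, j)` into the rising factorial `t(t+1)⋯(t+j-1)/j!`,
whose coefficients of `1, t, t²` are `[j = 0]`, `1/j` and `c(j,2)/j!`. The factor with
`j = n - k ≥ 1` has no constant term, so the `t²`-coefficient of `F_{k,n}(t-1)` only involves the
constant term of the sum over `j` (which is `1`, from `j = 0`) and its `t`-coefficient
`∑_{j ≥ 1} binom(n-k-1+j, j)/j`. -/

theorem coeff_two_mul {R : Type*} [Semiring R] (p q : R[X]) :
    (p * q).coeff 2 = p.coeff 0 * q.coeff 2 + p.coeff 1 * q.coeff 1 + p.coeff 2 * q.coeff 0 := by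
  simp only [coeff_mul, Finset.Nat.sum_antidiagonal_succ, Finset.Nat.antidiagonal_zero,
    Finset.sum_singleton]
  abel

section Pochhammer

variable (S : Type*)

theorem ascPochhammer_eq_prod_range [CommSemiring S] (n : ℕ) :
    ascPochhammer S n = ∏ i ∈ Finset.range n, (X + (i : S[X])) := by
  induction n with
  | zero => simp
  | succ n ih => rw [ascPochhammer_succ_right, ih, Finset.prod_range_succ]

variable [Semiring S]

theorem coeff_zero_ascPochhammer (n : ℕ) :
    (ascPochhammer S n).coeff 0 = if n = 0 then 1 else 0 := by
  rw [coeff_zero_eq_eval_zero, ascPochhammer_eval_zero]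

theorem coeff_one_ascPochhammer_succ (n : ℕ) :
    (ascPochhammer S (n + 1)).coeff 1 = n.factorial := by
  induction n with
  | zero => simp [ascPochhammer_one]
  | succ n ih =>
    rw [ascPochhammer_succ_right, mul_add, coeff_add, coeff_mul_X, ← C_eq_natCast, coeff_mul_C,
      ih, coeff_zero_ascPochhammer, if_neg n.succ_ne_zero, Nat.factorial_succ,
      zero_add, ← Nat.cast_mul, mul_comm]

theorem coeff_ascPochhammer_natCast (n i : ℕ) :
    (ascPochhammer S n).coeff i = ((ascPochhammer ℕ n).coeff i : S) := by
  rw [← ascPochhammer_map (Nat.castRingHom S), coeff_map, eq_natCast]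

end Pochhammer

theorem binomPoly_comp_X_sub_one (j : ℕ) :
    (binomPoly j).comp (X - 1) = C (1 / (j.factorial : ℚ)) * ascPochhammer ℚ j := by
  simp only [binomPoly, mul_comp, C_comp, prod_comp, add_comp, X_comp, C_add, C_1, one_comp,
    ascPochhammer_eq_prod_range, ← C_eq_natCast]
  congr 1
  exact Finset.prod_congr rfl fun i _ => by ring

theorem coeff_zero_binomPoly_comp_X_sub_one (j : ℕ) :
    ((binomPoly j).comp (X - 1)).coeff 0 = if j = 0 then 1 else 0 := by
  rw [binomPoly_comp_X_sub_one, coeff_C_mul, coeff_zero_ascPochhammer]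
  split_ifs with hj <;> simp [hj]

-- For `j = 0` both sides vanish, the right one because `1 / 0 = 0` in `ℚ`.
theorem coeff_one_binomPoly_comp_X_sub_one (j : ℕ) :
    ((binomPoly j).comp (X - 1)).coeff 1 = 1 / (j : ℚ) := by
  rw [binomPoly_comp_X_sub_one, coeff_C_mul]
  cases j with
  | zero => simp [coeff_one]
  | succ j =>
    rw [coeff_one_ascPochhammer_succ, Nat.factorial_succ]
    push_cast
    field_simp

theorem coeff_two_binomPoly_comp_X_sub_one (j : ℕ) :
    ((binomPoly j).comp (X - 1)).coeff 2 = ((ascPochhammer ℕ j).coeff 2 : ℚ) / j.factorial := by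
  rw [binomPoly_comp_X_sub_one, coeff_C_mul, coeff_ascPochhammer_natCast]
  ring

section ShiftedSum

variable (b : ℕ → ℚ) (k : ℕ)

theorem coeff_zero_sum_binomPoly_comp_X_sub_one (hk : k ≠ 0) :
    (∑ j ∈ Finset.range k, C (b j) * (binomPoly j).comp (X - 1)).coeff 0 = b 0 := by
  simp [finsetSum_coeff, coeff_zero_binomPoly_comp_X_sub_one, hk]

theorem coeff_one_sum_binomPoly_comp_X_sub_one :
    (∑ j ∈ Finset.range k, C (b j) * (binomPoly j).comp (X - 1)).coeff 1 =
      ∑ j ∈ Finset.Icc 1 (k - 1), 1 / (j : ℚ) * b j := by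
  simp only [finsetSum_coeff, coeff_C_mul, coeff_one_binomPoly_comp_X_sub_one]
  rw [← Finset.sum_subset (s₁ := Finset.Icc 1 (k - 1))]
  · exact Finset.sum_congr rfl fun j _ => mul_comm _ _
  · intro j hj
    simp only [Finset.mem_Icc, Finset.mem_range] at hj ⊢
    omega
  · intro j hj hj'
    obtain rfl : j = 0 := by
      simp only [Finset.mem_Icc, Finset.mem_range] at hj hj'
      omega
    simp

end ShiftedSum

theorem Fshift_eq (k n : ℕ) :
    Fshift k n = C (1 / (((n - 1).choose (k - 1) : ℕ) : ℚ)) *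
      ((binomPoly (n - k)).comp (X - 1) *
        ∑ j ∈ Finset.range k,
          C (((n - k - 1 + j).choose j : ℕ) : ℚ) * (binomPoly j).comp (X - 1)) := by
  simp only [Fshift, F, mul_comp, C_comp, sum_comp, mul_assoc]

theorem coeff_two_Fshift (n k : ℕ) (hk : 1 ≤ k) (hkn : k < n) :
    (Fshift k n).coeff 2 =
      (1 / (((n - 1).choose (k - 1) : ℕ) : ℚ)) *
        ((((ascPochhammer ℕ (n - k)).coeff 2 : ℕ) : ℚ) / ((n - k).factorial : ℚ) +
          (1 / (((n - k : ℕ)) : ℚ)) *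
            ∑ j ∈ Finset.Icc 1 (k - 1),
              (1 / (j : ℚ)) * (((n - k - 1 + j).choose j : ℕ) : ℚ)) := by
  rw [Fshift_eq, coeff_C_mul, coeff_two_mul,
    coeff_zero_sum_binomPoly_comp_X_sub_one _ _ (by omega),
    coeff_one_sum_binomPoly_comp_X_sub_one, coeff_zero_binomPoly_comp_X_sub_one,
    if_neg (by omega), coeff_one_binomPoly_comp_X_sub_one, coeff_two_binomPoly_comp_X_sub_one,
    add_zero, Nat.choose_zero_right, Nat.cast_one]
  ring

end EhrhartMatroid
end

section
/- Let M be a sparse paving matroid of rank k on an n-element ground set having exactly λ circuit-hyperplanes. Then λ·(k+1) ≤ binom(n,k) and λ·(n−k+1) ≤ binom(n,k). -/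
open Set Polynomial Pointwise

namespace EhrhartMatroid

variable {α : Type*}

/-!
If `H` is a circuit-hyperplane, `e ∈ H` and `x ∉ H`, then `insert x (H \ {e})` is a base, so all
circuit-hyperplanes of a rank-`k` matroid have `k` elements. Two distinct ones differ in at least
two elements on each side: if `C \ H ⊆ {e}` for a circuit `C` and a flat `H`, then `e` lies in
the closure of `C \ {e} ⊆ H`. Hence no `(k-1)`-set lies in two circuit-hyperplanes and no
`(k+1)`-set contains two of them, so `λ k ≤ C(n, k-1)` and `λ (n-k) ≤ C(n, k+1)`; these
are the two inequalities after clearing the ratios of neighbouring binomial coefficients.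
-/

open Finset
open scoped FinsetFamily

section SetFamily

variable {α : Type*} [Fintype α]

lemma ncard_setOf_eq_card_filter (p : Set α → Prop) [DecidablePred fun A : Finset α => p A] :
    {S | p S}.ncard = #{A : Finset α | p A} := by
  classical
  have himage : {S | p S} = (↑) '' (({A : Finset α | p A} : Finset _) : Set (Finset α)) := by
    ext S
    refine ⟨fun hS => ⟨S.toFinset, by simpa using hS, Set.coe_toFinset S⟩, ?_⟩
    rintro ⟨A, hA, rfl⟩
    simpa using hA
  rw [himage, Set.ncard_image_of_injective _ Finset.coe_injective, Set.ncard_coe_finset]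

variable [DecidableEq α] {𝒜 : Finset (Finset α)} {r : ℕ}

lemma card_mul_le_choose_pred (h𝒜 : (𝒜 : Set (Finset α)).Sized r)
    (hsep : ∀ A ∈ 𝒜, ∀ B ∈ 𝒜, #(A \ B) ≤ 1 → A = B) :
    #𝒜 * r ≤ (Fintype.card α).choose (r - 1) := by
  set 𝒯 : Finset (Finset α) := Finset.powersetCard (r - 1) univ
  -- double count the pairs `T ⊆ A` with `A ∈ 𝒜` and `T ∈ 𝒯`
  have hbelow : ∀ A ∈ 𝒜, r ≤ #(𝒯.bipartiteAbove (· ⊇ ·) A) := by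
    intro A hA
    have hsub : Finset.powersetCard (r - 1) A ⊆ 𝒯.bipartiteAbove (· ⊇ ·) A := by
      intro T hT
      simp_all [𝒯, bipartiteAbove, mem_powersetCard]
    refine le_trans ?_ (card_le_card hsub)
    rw [card_powersetCard, h𝒜 hA]
    rcases r with _ | r
    · exact Nat.zero_le _
    · simp [Nat.choose_succ_self_right]
  have habove : ∀ T ∈ 𝒯, #(𝒜.bipartiteBelow (· ⊇ ·) T) ≤ 1 := by
    intro T hT
    refine card_le_one.2 fun A hA B hB => ?_
    simp only [bipartiteBelow, mem_filter] at hA hB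
    refine hsep A hA.1 B hB.1 ?_
    calc #(A \ B) ≤ #(A \ T) := card_le_card (sdiff_subset_sdiff le_rfl hB.2)
      _ = #A - #T := card_sdiff_of_subset hA.2
      _ ≤ 1 := by rw [h𝒜 hA.1, (mem_powersetCard.1 hT).2]; omega
  simpa [𝒯, card_powersetCard] using card_mul_le_card_mul _ hbelow habove

lemma card_mul_sub_add_one_le_choose (h𝒜 : (𝒜 : Set (Finset α)).Sized r) (hr : 0 < r)
    (hsep : ∀ A ∈ 𝒜, ∀ B ∈ 𝒜, #(A \ B) ≤ 1 → A = B) :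
    #𝒜 * (Fintype.card α - r + 1) ≤ (Fintype.card α).choose r := by
  obtain rfl | ⟨A, hA⟩ := 𝒜.eq_empty_or_nonempty
  · simp
  obtain ⟨s, rfl⟩ := Nat.exists_eq_add_of_le' hr
  have hsn : s + 1 ≤ Fintype.card α := h𝒜 hA ▸ card_le_univ A
  have hlow : #𝒜 * (s + 1) ≤ (Fintype.card α).choose s := by
    simpa using card_mul_le_choose_pred h𝒜 hsep
  have hsub : Fintype.card α - (s + 1) + 1 = Fintype.card α - s := by omega
  refine Nat.le_of_mul_le_mul_right ?_ s.succ_pos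
  calc #𝒜 * (Fintype.card α - (s + 1) + 1) * (s + 1)
      = #𝒜 * (s + 1) * (Fintype.card α - s) := by rw [hsub]; ring
    _ ≤ (Fintype.card α).choose s * (Fintype.card α - s) := Nat.mul_le_mul_right _ hlow
    _ = (Fintype.card α).choose (s + 1) * (s + 1) := (Nat.choose_succ_right_eq _ s).symm

lemma card_mul_add_one_le_choose (h𝒜 : (𝒜 : Set (Finset α)).Sized r)
    (hr : r < Fintype.card α) (hsep : ∀ A ∈ 𝒜, ∀ B ∈ 𝒜, #(A \ B) ≤ 1 → A = B) :
    #𝒜 * (r + 1) ≤ (Fintype.card α).choose r := by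
  have hsep' : ∀ A ∈ 𝒜ᶜˢ, ∀ B ∈ 𝒜ᶜˢ, #(A \ B) ≤ 1 → A = B := by
    simp only [forall_mem_compls, compl_sdiff_compl, compl_inj_iff]
    exact fun A hA B hB h => (hsep B hB A hA h).symm
  have := card_mul_sub_add_one_le_choose h𝒜.compls (Nat.sub_pos_of_lt hr) hsep'
  rwa [card_compls, Nat.sub_sub_self hr.le, Nat.choose_symm hr.le] at this

end SetFamily

section Matroid

variable {α : Type*} {M : Matroid α} {B C F H : Set α} {e x : α}

lemma isCircuit_iff_isCircuit : IsCircuit M C ↔ M.IsCircuit C := by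
  rw [Matroid.isCircuit_iff_forall_ssubset]
  exact Iff.rfl

lemma rank_eq_ncard (hB : M.IsBase B) : rank M = B.ncard := by
  have hranks : {n | ∃ B, M.IsBase B ∧ B.ncard = n} = {B.ncard} := by
    ext n
    refine ⟨?_, fun h => ⟨B, hB, h.symm⟩⟩
    rintro ⟨B', hB', rfl⟩
    exact hB'.ncard_eq_ncard_of_isBase hB
  rw [rank, hranks, csSup_singleton]

lemma _root_.Matroid.IsCircuit.subset_of_isFlat (hC : M.IsCircuit C) (hF : M.IsFlat F)
    (hCF : (C \ F).Subsingleton) : C ⊆ F := by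
  by_contra hne
  obtain ⟨e, heC, heF⟩ := Set.not_subset.1 hne
  have hsub : C \ {e} ⊆ F := fun y hy =>
    by_contra fun hyF => hy.2 (hCF ⟨hy.1, hyF⟩ ⟨heC, heF⟩)
  exact heF <| hF.closure ▸
    M.closure_subset_closure hsub (hC.mem_closure_sdiff_singleton_of_mem heC)

namespace IsCircuitHyperplane

lemma isBase_insert_sdiff_singleton (hH : IsCircuitHyperplane M H) (he : e ∈ H) (hx : x ∈ M.E)
    (hxH : x ∉ H) : M.IsBase (insert x (H \ {e})) := by
  have hC := isCircuit_iff_isCircuit.1 hH.1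
  have hcl : M.closure (H \ {e}) = H := by rw [hC.closure_sdiff_singleton_eq, hH.2.1.closure]
  refine Matroid.isBase_iff_indep_closure_eq.2
    ⟨(hC.sdiff_singleton_indep he).insert_indep_iff.2 (.inl ⟨hx, by rwa [hcl]⟩), ?_⟩
  -- the closure is a flat strictly containing the hyperplane `H`
  refine (hH.2.2.2 _ (M.isFlat_closure _) ?_).resolve_left fun h => hxH ?_
  · exact hcl.symm.subset.trans (M.closure_subset_closure (Set.subset_insert _ _))
  · exact h ▸ M.mem_closure_of_mem' (Set.mem_insert _ _)

lemma ssubset_ground (hH : IsCircuitHyperplane M H) : H ⊂ M.E :=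
  hH.2.1.subset_ground.ssubset_of_ne hH.2.2.1

lemma ncard_eq_rank [M.RankFinite] (hH : IsCircuitHyperplane M H) : H.ncard = rank M := by
  obtain ⟨e, he⟩ := hH.1.1.nonempty
  obtain ⟨x, hx, hxH⟩ := Set.exists_of_ssubset hH.ssubset_ground
  have hB := hH.isBase_insert_sdiff_singleton he hx hxH
  have hfin : (H \ {e}).Finite := hB.finite.subset (Set.subset_insert _ _)
  rw [rank_eq_ncard hB, Set.ncard_insert_of_notMem (fun h => hxH h.1) hfin,
    Set.ncard_sdiff_singleton_add_one he (hfin.of_sdiff (Set.finite_singleton e))]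

lemma eq_of_card_sdiff_le_one [M.RankFinite] [DecidableEq α] {A B : Finset α}
    (hA : IsCircuitHyperplane M A) (hB : IsCircuitHyperplane M B) (hAB : #(A \ B) ≤ 1) :
    A = B := by
  have hsub : (A : Set α) ⊆ B := (isCircuit_iff_isCircuit.1 hA.1).subset_of_isFlat hB.2.1
    (by rw [← Finset.coe_sdiff]; exact Finset.card_le_one_iff_subsingleton.1 hAB)
  refine Finset.eq_of_subset_of_card_le (Finset.coe_subset.1 hsub) ?_
  rw [← Set.ncard_coe_finset, ← Set.ncard_coe_finset, hA.ncard_eq_rank, hB.ncard_eq_rank]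

end IsCircuitHyperplane

end Matroid

theorem circuitHyperplane_count_bound_general (n k lam : ℕ) (M : Matroid (Fin n))
    (hrk : rank M = k)
    (hlam : {H | IsCircuitHyperplane M H}.ncard = lam) :
    lam * (k + 1) ≤ n.choose k ∧ lam * (n - k + 1) ≤ n.choose k := by
  classical
  set 𝒜 : Finset (Finset (Fin n)) := {A | IsCircuitHyperplane M A}
  have hmem : ∀ {A}, A ∈ 𝒜 ↔ IsCircuitHyperplane M A := by simp [𝒜]
  have hsized : (𝒜 : Set (Finset (Fin n))).Sized k := fun A hA => by
    rw [← Set.ncard_coe_finset, (hmem.1 hA).ncard_eq_rank, hrk]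
  have hsep : ∀ A ∈ 𝒜, ∀ B ∈ 𝒜, #(A \ B) ≤ 1 → A = B := fun A hA B hB =>
    (hmem.1 hA).eq_of_card_sdiff_le_one (hmem.1 hB)
  rw [← hlam, ncard_setOf_eq_card_filter]
  obtain h𝒜 | ⟨A, hA⟩ := 𝒜.eq_empty_or_nonempty
  · simp [𝒜] at h𝒜
    simp [h𝒜]
  have hk : 0 < k := hsized hA ▸ Finset.card_pos.2 (by exact_mod_cast (hmem.1 hA).1.1.nonempty)
  obtain ⟨x, -, hxA⟩ := Set.exists_of_ssubset (hmem.1 hA).ssubset_ground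
  have hkn : k < Fintype.card (Fin n) := hsized hA ▸ Finset.card_lt_univ_of_notMem hxA
  simpa using And.intro (card_mul_add_one_le_choose hsized hkn hsep)
    (card_mul_sub_add_one_le_choose hsized hk hsep)

theorem circuitHyperplane_count_bound (n k lam : ℕ) (M : Matroid (Fin n))
    (hE : M.E = Set.univ) (hM : IsSparsePaving M) (hrk : rank M = k)
    (hlam : {H | IsCircuitHyperplane M H}.ncard = lam) :
    lam * (k + 1) ≤ n.choose k ∧ lam * (n - k + 1) ≤ n.choose k :=
  circuitHyperplane_count_bound_general n k lam M hrk hlam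

end EhrhartMatroid
end

section
/- For all integers n ≥ 4 and 2 ≤ m ≤ n−1, the unsigned Stirling numbers of the first kind satisfy 2·c(n,m+1)·(2^m − m − 1) + 2·(n−1)·c(n−1,m+1) ≥ n·( c(n−2,m) + (n−2)·c(n−2,m−1) ). -/
open Set Polynomial Pointwise

/-!
The summand `n c(n-2,m)` is dominated by `2(n-1) c(n-1,m+1)` because `c(n-2,m) ≤ c(n-1,m+1)`.
The other summand is handled by `n(n-2) c(n-2,m-1) ≤ 2(2^m-m-1) c(n,m+1)`, proved for all `m`
at once by induction on `n ≥ 4` through the recurrence `c(n+1,k+1) = n c(n,k+1) + c(n,k)`: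
the quadratic factor `n(n-2)` grows slowly enough in `n`, and `2^m - m - 1` at least doubles
when `m` increases.
-/

theorem ascPochhammer_nat_coeff_eq_stirlingFirst (n k : ℕ) :
    (ascPochhammer ℕ n).coeff k = Nat.stirlingFirst n k := by
  induction n generalizing k with
  | zero => cases k <;> simp [coeff_one]
  | succ n ih =>
    rw [ascPochhammer_succ_right, mul_add, coeff_add, ← C_eq_natCast, coeff_mul_C]
    cases k with
    | zero => cases n <;> simp [ih]
    | succ k =>
      rw [coeff_mul_X, ih, ih, Nat.stirlingFirst_succ_succ, add_comm, mul_comm, Nat.cast_id]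

namespace Nat

theorem stirlingFirst_le_succ_succ (n k : ℕ) :
    stirlingFirst n k ≤ stirlingFirst (n + 1) (k + 1) := by
  rw [stirlingFirst_succ_succ]
  exact Nat.le_add_left _ _

theorem two_mul_two_pow_sub_sub_one_le (m : ℕ) :
    2 * (2 ^ m - m - 1) ≤ 2 ^ (m + 1) - (m + 1) - 1 := by
  have := Nat.lt_two_pow_self (n := m)
  rw [pow_succ]
  omega

theorem stirlingFirst_le_stirlingFirst_add_two (N i : ℕ) (hN : 2 ≤ N) :
    (N + 2) * N * stirlingFirst N i ≤
      2 * (2 ^ (i + 1) - (i + 1) - 1) * stirlingFirst (N + 2) (i + 2) := by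
  induction N, hN using Nat.le_induction generalizing i with
  | base =>
    rcases i with _ | _ | _ | i
    · simp
    · decide
    · decide
    · simp [stirlingFirst_eq_zero_of_lt (show 2 < i + 3 by omega)]
  | succ N hN ih =>
    rcases i with _ | j
    · simp
    have hA := two_mul_two_pow_sub_sub_one_le (j + 1)
    set a := 2 ^ (j + 1) - (j + 1) - 1
    set a' := 2 ^ (j + 1 + 1) - (j + 1 + 1) - 1
    have hsq : (N + 1 + 2) * (N + 1) ≤ (N + 2) * (N + 2) := by nlinarith
    have hdouble : (N + 1 + 2) * (N + 1) ≤ 2 * ((N + 2) * N) := by nlinarith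
    have hA' : 2 * (2 * a * stirlingFirst (N + 2) (j + 2)) ≤
        2 * a' * stirlingFirst (N + 2) (j + 2) := by
      rw [← mul_assoc]; exact Nat.mul_le_mul_right _ (Nat.mul_le_mul_left 2 hA)
    calc (N + 1 + 2) * (N + 1) * stirlingFirst (N + 1) (j + 1)
        = (N + 1 + 2) * (N + 1) * (N * stirlingFirst N (j + 1)) +
            (N + 1 + 2) * (N + 1) * stirlingFirst N j := by
          rw [stirlingFirst_succ_succ, mul_add]
      _ ≤ (N + 2) * (N + 2) * (N * stirlingFirst N (j + 1)) +
            2 * ((N + 2) * N) * stirlingFirst N j :=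
          Nat.add_le_add (Nat.mul_le_mul_right _ hsq) (Nat.mul_le_mul_right _ hdouble)
      _ = (N + 2) * ((N + 2) * N * stirlingFirst N (j + 1)) +
            2 * ((N + 2) * N * stirlingFirst N j) := by ring
      _ ≤ (N + 2) * (2 * a' * stirlingFirst (N + 2) (j + 1 + 2)) +
            2 * (2 * a * stirlingFirst (N + 2) (j + 2)) := by
          gcongr (N + 2) * ?_ + 2 * ?_
          exacts [ih (j + 1), ih j]
      _ ≤ (N + 2) * (2 * a' * stirlingFirst (N + 2) (j + 1 + 2)) +
            2 * a' * stirlingFirst (N + 2) (j + 2) := Nat.add_le_add_left hA' _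
      _ = 2 * a' * stirlingFirst (N + 1 + 2) (j + 1 + 2) := by
          rw [stirlingFirst_succ_succ (N + 2) (j + 2)]; ring

end Nat

namespace EhrhartMatroid

theorem stirling_inequality_target_general (n m : ℕ) (hn : 4 ≤ n) (hm : 2 ≤ m) :
    n * ((ascPochhammer ℕ (n - 2)).coeff m +
        (n - 2) * (ascPochhammer ℕ (n - 2)).coeff (m - 1)) ≤
      2 * (ascPochhammer ℕ n).coeff (m + 1) * (2 ^ m - m - 1) +
        2 * (n - 1) * (ascPochhammer ℕ (n - 1)).coeff (m + 1) := by
  obtain ⟨N, rfl⟩ : ∃ N, n = N + 2 := ⟨n - 2, by omega⟩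
  obtain ⟨i, rfl⟩ : ∃ i, m = i + 1 := ⟨m - 1, by omega⟩
  simp only [ascPochhammer_nat_coeff_eq_stirlingFirst, Nat.add_sub_cancel]
  have hfirst : (N + 2) * Nat.stirlingFirst N (i + 1) ≤
      2 * (N + 1) * Nat.stirlingFirst (N + 1) (i + 1 + 1) :=
    Nat.mul_le_mul (by omega) (Nat.stirlingFirst_le_succ_succ N (i + 1))
  have hsecond := Nat.stirlingFirst_le_stirlingFirst_add_two N i (by omega)
  rw [show N + 2 - 1 = N + 1 by omega]
  linarith

theorem stirling_inequality_target (n m : ℕ) (hn : 4 ≤ n) (hm : 2 ≤ m)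
    (hmn : m ≤ n - 1) :
    n * ((ascPochhammer ℕ (n - 2)).coeff m +
        (n - 2) * (ascPochhammer ℕ (n - 2)).coeff (m - 1)) ≤
      2 * (ascPochhammer ℕ n).coeff (m + 1) * (2 ^ m - m - 1) +
        2 * (n - 1) * (ascPochhammer ℕ (n - 1)).coeff (m + 1) :=
  stirling_inequality_target_general n m hn hm

end EhrhartMatroid
end

section
/- For all integers m ≥ 13 and n ≥ m+1, the unsigned Stirling numbers of the first kind satisfy c(n,m−1) ≤ c(n,m+1)·(2^m − m − 2). -/
open Set Polynomial Pointwise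

namespace EhrhartMatroid

variable {α : Type*}

/-
The recurrence c(n+1, k+1) = c(n, k) + n c(n, k+1) propagates the ratio bound
c(n, j) ≤ c(n, j+2) · c(j+2, j) from the diagonal n = j+2 to all n ≥ j+2, using that
c(j+2, j) increases with j. The explicit value 24 c(j+2, j) = (3j+5)(j+2)(j+1)j then shows
c(m+1, m-1) ≤ 2^m - m - 2 once m ≥ 11.
-/

open Nat

theorem coeff_ascPochhammer_eq_stirlingFirst (n k : ℕ) :
    (ascPochhammer ℕ n).coeff k = stirlingFirst n k := by
  induction n generalizing k with
  | zero => cases k <;> simp [coeff_one]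
  | succ n ih =>
    cases k with
    | zero => simp [coeff_zero_eq_eval_zero]
    | succ k =>
      rw [ascPochhammer_succ_right, mul_add, coeff_add, coeff_mul_X, ← C_eq_natCast,
        coeff_mul_C, ih, ih, stirlingFirst_succ_succ, Nat.cast_id, add_comm, mul_comm]

theorem stirlingFirst_le_stirlingFirst_add_two_mul {n j : ℕ} (h : j + 2 ≤ n) :
    stirlingFirst n j ≤ stirlingFirst n (j + 2) * stirlingFirst (j + 2) j := by
  induction n generalizing j with
  | zero => omega
  | succ n ih =>
    obtain h | h := h.eq_or_lt
    · obtain rfl : n = j + 1 := by omega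
      simp [stirlingFirst_self]
    cases j with
    | zero => simp
    | succ i =>
      have hi := ih (j := i) (by omega)
      have hi_succ := ih (j := i + 1) (by omega)
      have hmono : stirlingFirst (i + 2) i ≤ stirlingFirst (i + 3) (i + 1) := by
        rw [stirlingFirst_succ_succ]
        exact le_add_self
      calc stirlingFirst (n + 1) (i + 1)
          = n * stirlingFirst n (i + 1) + stirlingFirst n i := stirlingFirst_succ_succ n i
        _ ≤ n * (stirlingFirst n (i + 3) * stirlingFirst (i + 3) (i + 1))
              + stirlingFirst n (i + 2) * stirlingFirst (i + 3) (i + 1) := by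
            gcongr
            exact hi.trans (Nat.mul_le_mul_left _ hmono)
        _ = stirlingFirst (n + 1) (i + 3) * stirlingFirst (i + 3) (i + 1) := by
            rw [stirlingFirst_succ_succ n (i + 2)]
            ring

theorem twentyFour_mul_stirlingFirst_add_two_self_left (j : ℕ) :
    24 * stirlingFirst (j + 2) j = (3 * j + 5) * (j + 2) * (j + 1) * j := by
  induction j with
  | zero => simp
  | succ j ih =>
    have hchoose : 2 * (j + 2).choose 2 = (j + 2) * (j + 1) := by
      rw [choose_two_right]
      exact Nat.mul_div_cancel' (Nat.even_mul_pred_self _).two_dvd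
    rw [stirlingFirst_succ_succ, stirlingFirst_succ_self_left, mul_add, ih]
    nlinarith [hchoose]

theorem quartic_add_le_two_pow {j : ℕ} (hj : 10 ≤ j) :
    (3 * j + 5) * (j + 2) * (j + 1) * j + 24 * (j + 3) ≤ 24 * 2 ^ (j + 1) := by
  induction j, hj using Nat.le_induction with
  | base => norm_num
  | succ j hj ih =>
    have hdouble : (3 * (j + 1) + 5) * (j + 3) * (j + 2) * (j + 1) + 24 * (j + 4) ≤
        2 * ((3 * j + 5) * (j + 2) * (j + 1) * j + 24 * (j + 3)) := by
      obtain ⟨t, rfl⟩ : ∃ t, j = 10 + t := ⟨j - 10, by omega⟩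
      nlinarith [sq_nonneg t]
    linarith [pow_succ 2 (j + 1)]

theorem stirlingFirst_succ_pred_add_le_two_pow {m : ℕ} (hm : 11 ≤ m) :
    stirlingFirst (m + 1) (m - 1) + m + 2 ≤ 2 ^ m := by
  obtain ⟨j, rfl⟩ : ∃ j, m = j + 1 := ⟨m - 1, by omega⟩
  have h24 := twentyFour_mul_stirlingFirst_add_two_self_left j
  have hbound := quartic_add_le_two_pow (j := j) (by omega)
  show stirlingFirst (j + 2) j + (j + 1) + 2 ≤ 2 ^ (j + 1)
  linarith

theorem stirling_inequality_reduced (n m : ℕ) (hm : 13 ≤ m) (hn : m + 1 ≤ n) :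
    (ascPochhammer ℕ n).coeff (m - 1) ≤
      (ascPochhammer ℕ n).coeff (m + 1) * (2 ^ m - m - 2) := by
  have hm1 : m - 1 + 2 = m + 1 := by omega
  rw [coeff_ascPochhammer_eq_stirlingFirst, coeff_ascPochhammer_eq_stirlingFirst]
  calc stirlingFirst n (m - 1)
      ≤ stirlingFirst n (m + 1) * stirlingFirst (m + 1) (m - 1) := by
        simpa only [hm1] using stirlingFirst_le_stirlingFirst_add_two_mul (j := m - 1) (by omega)
    _ ≤ stirlingFirst n (m + 1) * (2 ^ m - m - 2) := by
        have := stirlingFirst_succ_pred_add_le_two_pow (by omega : 11 ≤ m)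
        gcongr
        omega

end EhrhartMatroid
end

section
/- For every integer n ≥ 4, (n−1)(n−2)·( H_{n−1}² − H_{n−1}^{(2)} + H_{n−2}² − H_{n−2}^{(2)} ) ≥ n·H_{n−3} + n(n−2). -/
open Set Polynomial Pointwise

namespace EhrhartMatroid

variable {α : Type*}

/-- The generalized harmonic number of order 2: `H_n^{(2)} = Σ_{i=1}^n 1/i²`. -/
noncomputable def harmonicSq (n : ℕ) : ℚ :=
  ∑ i ∈ Finset.range n, 1 / ((i : ℚ) + 1) ^ 2

/-! Write `h = H_{n-2}`. Since `H_m² - H_m^{(2)} = 2 Σ_{i<j≤m} 1/(ij)`, passing from `m` to `m + 1`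
adds `2 H_m/(m+1)`; so the bracket equals `2 (h² - H_{n-2}^{(2)}) + 2h/(n-1)`, and
`h² - H_{n-2}^{(2)}` is increasing in `n` with value `1` at `n = 4`. Bounding it below by `1` and
`H_{n-3}` above by `h` leaves an inequality linear in `h` that holds for `n ≥ 4`. -/

lemma harmonic_monotone : Monotone harmonic :=
  monotone_nat_of_le_succ fun n => by rw [harmonic_succ]; exact le_add_of_nonneg_right (by positivity)

lemma harmonicSq_succ (n : ℕ) : harmonicSq (n + 1) = harmonicSq n + 1 / ((n : ℚ) + 1) ^ 2 :=
  Finset.sum_range_succ ..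

lemma harmonic_sq_sub_harmonicSq_succ (n : ℕ) :
    harmonic (n + 1) ^ 2 - harmonicSq (n + 1) =
      harmonic n ^ 2 - harmonicSq n + 2 * harmonic n / ((n : ℚ) + 1) := by
  rw [harmonic_succ, harmonicSq_succ]
  push_cast
  field_simp
  ring

lemma one_le_harmonic_sq_sub_harmonicSq {n : ℕ} (hn : 2 ≤ n) :
    1 ≤ harmonic n ^ 2 - harmonicSq n := by
  induction n, hn using Nat.le_induction with
  | base => norm_num [harmonicSq, Finset.sum_range_succ]
  | succ n _ ih =>
    rw [harmonic_sq_sub_harmonicSq_succ]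
    have h_pos : 0 < harmonic n := harmonic_pos (by omega)
    have : 0 ≤ 2 * harmonic n / ((n : ℚ) + 1) := by positivity
    linarith

theorem harmonic_inequality (n : ℕ) (hn : 4 ≤ n) :
    (n : ℚ) * harmonic (n - 3) + (n : ℚ) * ((n : ℚ) - 2) ≤
      ((n : ℚ) - 1) * ((n : ℚ) - 2) *
        ((harmonic (n - 1)) ^ 2 - harmonicSq (n - 1) +
          (harmonic (n - 2)) ^ 2 - harmonicSq (n - 2)) := by
  obtain ⟨m, rfl⟩ : ∃ m, n = m + 2 := ⟨n - 2, by omega⟩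
  rw [show m + 2 - 1 = m + 1 by omega, show m + 2 - 2 = m by omega,
    harmonic_sq_sub_harmonicSq_succ]
  set h := harmonic m
  have hm : (2 : ℚ) ≤ m := by exact_mod_cast (show 2 ≤ m by omega)
  have h_pos : 0 < h := harmonic_pos (by omega)
  have h_prev : harmonic (m + 2 - 3) ≤ h := harmonic_monotone (by omega)
  have h_pair : 1 ≤ h ^ 2 - harmonicSq m := one_le_harmonic_sq_sub_harmonicSq (by omega)
  push_cast
  calc ((m : ℚ) + 2) * harmonic (m + 2 - 3) + (m + 2) * (m + 2 - 2)
      ≤ (m + 2) * h + (m + 2) * m := by gcongr; linarith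
    _ ≤ 2 * m * (m + 1) * 1 + 2 * m * h := by nlinarith [mul_nonneg (sub_nonneg.2 hm) h_pos.le]
    _ ≤ 2 * m * (m + 1) * (h ^ 2 - harmonicSq m) + 2 * m * h := by gcongr
    _ = (m + 2 - 1) * (m + 2 - 2) *
          (h ^ 2 - harmonicSq m + 2 * h / ((m : ℚ) + 1) + h ^ 2 - harmonicSq m) := by
        field_simp
        ring

end EhrhartMatroid
end
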